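/- Let a^{j̄i} be a positive-definite Hermitian n×n matrix, b ∈ ℂⁿ with b^i = ∑_j a^{j̄i} b̄_j, α² = ∑ a^{j̄i} ζ̄_j ζ_i, β = ∑ b^i ζ_i, 𝒞̃ = α + |β|, ‖b‖² = ∑ a^{j̄i} b_i b̄_j, γ = 𝒞̃² + α²(‖b‖² − 1). Then the Hermitian matrix h̃^{j̄i} := (𝒞̃/α) a^{j̄i} − (𝒞̃/(2α³)) ζ^{j̄} ζ^i + (𝒞̃/(2|β|)) b^{j̄} b^i + (1/(2𝒞̃²)) ζ̃^{j̄} ζ̃^i, where ζ^i = ∑_j a^{j̄i}ζ̄_j (so ζ^i = ∂α²/∂ζ_i) and ζ̃^i = (𝒞̃/α)ζ^i + (𝒞̃β̄/|β|) b^i, satisfies det(h̃^{j̄i}) = (𝒞̃/α)ⁿ · (γ/(2α|β|)) · det(a^{j̄i}). -/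

import Mathlib

open scoped BigOperators ComplexOrder
open Complex

noncomputable section

/-- b^i = ∑_j a^{j̄i} b̄_j. -/
def bupF {n : ℕ} (a : Matrix (Fin n) (Fin n) ℂ) (b : Fin n → ℂ) (i : Fin n) : ℂ :=
  ∑ j, a j i * (starRingEnd ℂ) (b j)

/-- β = ∑_i b^i ζ_i. -/
def betaF {n : ℕ} (a : Matrix (Fin n) (Fin n) ℂ) (b ζ : Fin n → ℂ) : ℂ :=
  ∑ i, bupF a b i * ζ i

/-- ζ^i = ∑_j a^{j̄i} ζ̄_j = ∂α²/∂ζ_i. -/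
def zupF {n : ℕ} (a : Matrix (Fin n) (Fin n) ℂ) (ζ : Fin n → ℂ) (i : Fin n) : ℂ :=
  ∑ j, a j i * (starRingEnd ℂ) (ζ j)

/-- α² = ∑ a^{j̄i} ζ̄_j ζ_i (a real number). -/
def alphaSqF {n : ℕ} (a : Matrix (Fin n) (Fin n) ℂ) (ζ : Fin n → ℂ) : ℝ :=
  (∑ j, ∑ i, a j i * (starRingEnd ℂ) (ζ j) * ζ i).re

/-- α. -/
def alphaF {n : ℕ} (a : Matrix (Fin n) (Fin n) ℂ) (ζ : Fin n → ℂ) : ℝ :=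
  Real.sqrt (alphaSqF a ζ)

/-- ‖b‖² = ∑ a^{j̄i} b_i b̄_j. -/
def nbF {n : ℕ} (a : Matrix (Fin n) (Fin n) ℂ) (b : Fin n → ℂ) : ℝ :=
  (∑ j, ∑ i, a j i * b i * (starRingEnd ℂ) (b j)).re

/-- 𝒞̃ = α + |β|. -/
def CF {n : ℕ} (a : Matrix (Fin n) (Fin n) ℂ) (b ζ : Fin n → ℂ) : ℝ :=
  alphaF a ζ + ‖betaF a b ζ‖

/-- γ = 𝒞̃² + α²(‖b‖² − 1). -/
def gammaF {n : ℕ} (a : Matrix (Fin n) (Fin n) ℂ) (b ζ : Fin n → ℂ) : ℝ :=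
  (CF a b ζ) ^ 2 + (alphaSqF a ζ) * (nbF a b - 1)

/-- ζ̃^i = (𝒞̃/α)ζ^i + (𝒞̃β̄/|β|)b^i. -/
def ztilF {n : ℕ} (a : Matrix (Fin n) (Fin n) ℂ) (b ζ : Fin n → ℂ) (i : Fin n) : ℂ :=
  ((CF a b ζ : ℝ) : ℂ) / ((alphaF a ζ : ℝ) : ℂ) * zupF a ζ i +
    ((CF a b ζ : ℝ) : ℂ) * (starRingEnd ℂ) (betaF a b ζ) /
      ((‖betaF a b ζ‖ : ℝ) : ℂ) * bupF a b i

/-- The fundamental tensor h̃^{j̄i} of the Cartan–Randers metric 𝒞̃ = α + |β|. -/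
def htilF {n : ℕ} (a : Matrix (Fin n) (Fin n) ℂ) (b ζ : Fin n → ℂ) :
    Matrix (Fin n) (Fin n) ℂ := Matrix.of fun j i =>
  ((CF a b ζ : ℝ) : ℂ) / ((alphaF a ζ : ℝ) : ℂ) * a j i
    - ((CF a b ζ : ℝ) : ℂ) / (2 * ((alphaF a ζ : ℝ) : ℂ) ^ 3) *
        (starRingEnd ℂ) (zupF a ζ j) * zupF a ζ i
    + ((CF a b ζ : ℝ) : ℂ) / (2 * ((‖betaF a b ζ‖ : ℝ) : ℂ)) *
        (starRingEnd ℂ) (bupF a b j) * bupF a b i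
    + 1 / (2 * ((CF a b ζ : ℝ) : ℂ) ^ 2) * (starRingEnd ℂ) (ztilF a b ζ j) * ztilF a b ζ i

end

/-!
Write `x♯ = x̄ᵀ a` (`zupF a x`). Since `a` is Hermitian, `conj (x♯ j) = (a x) j`, so every rank-one
term of `h̃` has the form `a x x* a`, and `ζ̃ = w♯` for `w = (𝒞̃/α) ζ + (𝒞̃ β/|β|) b`. Hence
`h̃ = a (s • 1 + W D W* a)` with `s = 𝒞̃/α`, `W = (ζ, b, w)` and `D` the diagonal of the three
coefficients, and the Weinstein–Aronszajn identity `det (1 + X Y) = det (1 + Y X)` turns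
`det h̃` into `sⁿ det a` times the `3 × 3` determinant `det (1 + s⁻¹ D G)`, where `G = W* a W` is the
Gram matrix of `ζ, b, w` with respect to `a`. Its entries are built from `α²`, `β`, `β̄` and `‖b‖²`,
and with `β β̄ = |β|²` that determinant is `γ / (2 α |β|)`.
-/

open Matrix

theorem Matrix.sum_smul_vecMulVec_eq_mul_diagonal_mul {R m n ι : Type*} [CommSemiring R]
    [Fintype ι] [DecidableEq ι] (X : Matrix m ι R) (c : ι → R) (Y : Matrix ι n R) :
    ∑ k, c k • vecMulVec (fun i => X i k) (Y k) = X * diagonal c * Y := by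
  ext i j
  rw [Matrix.sum_apply, mul_apply]
  simp only [smul_apply, vecMulVec_apply, mul_diagonal, smul_eq_mul]
  exact Finset.sum_congr rfl fun k _ => by ring

theorem Matrix.det_smul_one_add_mul {K m n : Type*} [Field K] [Fintype m] [DecidableEq m]
    [Fintype n] [DecidableEq n] {s : K} (hs : s ≠ 0) (U : Matrix m n K) (V : Matrix n m K) :
    det (s • 1 + U * V) = s ^ Fintype.card m * det (1 + s⁻¹ • (V * U)) := by
  have hfactor : s • 1 + U * V = s • (1 + U * (s⁻¹ • V)) := by
    rw [smul_add, Matrix.mul_smul, smul_smul, mul_inv_cancel₀ hs, one_smul]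
  rw [hfactor, det_smul, det_one_add_mul_comm, Matrix.smul_mul]

theorem Matrix.IsHermitian.coe_re_star_dotProduct_mulVec_self {ι : Type*} [Fintype ι]
    {a : Matrix ι ι ℂ} (ha : a.IsHermitian) (x : ι → ℂ) :
    (((star x ⬝ᵥ a *ᵥ x).re : ℝ) : ℂ) = star x ⬝ᵥ a *ᵥ x :=
  Complex.ext rfl (by simpa using (ha.im_star_dotProduct_mulVec_self x).symm)

section HermitianForm

variable {n : ℕ}

theorem zupF_eq_star_vecMul (a : Matrix (Fin n) (Fin n) ℂ) (x : Fin n → ℂ) :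
    zupF a x = star x ᵥ* a := by
  ext i
  simp only [zupF, vecMul, dotProduct, Pi.star_apply, starRingEnd_apply, mul_comm]

theorem bupF_eq_zupF (a : Matrix (Fin n) (Fin n) ℂ) (b : Fin n → ℂ) : bupF a b = zupF a b := rfl

theorem star_zupF {a : Matrix (Fin n) (Fin n) ℂ} (ha : a.IsHermitian) (x : Fin n → ℂ) :
    star (zupF a x) = a *ᵥ x := by
  rw [zupF_eq_star_vecMul, star_vecMul, ha.eq, star_star]

theorem zupF_add_smul (a : Matrix (Fin n) (Fin n) ℂ) (p q : ℂ) (x y : Fin n → ℂ) :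
    zupF a (p • x + q • y) = star p • zupF a x + star q • zupF a y := by
  simp only [zupF_eq_star_vecMul, star_add, star_smul, add_vecMul, smul_vecMul]

theorem alphaSqF_eq_re (a : Matrix (Fin n) (Fin n) ℂ) (ζ : Fin n → ℂ) :
    alphaSqF a ζ = (star ζ ⬝ᵥ a *ᵥ ζ).re := by
  simp only [alphaSqF, dotProduct, mulVec, Finset.mul_sum, Pi.star_apply, starRingEnd_apply]
  congr 1
  exact Finset.sum_congr rfl fun j _ => Finset.sum_congr rfl fun i _ => by ring

theorem ofReal_alphaSqF {a : Matrix (Fin n) (Fin n) ℂ} (ha : a.IsHermitian) (ζ : Fin n → ℂ) :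
    (alphaSqF a ζ : ℂ) = star ζ ⬝ᵥ a *ᵥ ζ := by
  rw [alphaSqF_eq_re, ha.coe_re_star_dotProduct_mulVec_self]

theorem alphaSqF_pos {a : Matrix (Fin n) (Fin n) ℂ} (ha : a.PosDef) {ζ : Fin n → ℂ}
    (hζ : ζ ≠ 0) : 0 < alphaSqF a ζ := by
  rw [alphaSqF_eq_re]
  exact (Complex.pos_iff.mp (ha.dotProduct_mulVec_pos hζ)).1

theorem nbF_eq_re (a : Matrix (Fin n) (Fin n) ℂ) (b : Fin n → ℂ) :
    nbF a b = (star b ⬝ᵥ a *ᵥ b).re := by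
  simp only [nbF, dotProduct, mulVec, Finset.mul_sum, Pi.star_apply, starRingEnd_apply]
  congr 1
  exact Finset.sum_congr rfl fun j _ => Finset.sum_congr rfl fun i _ => by ring

theorem ofReal_nbF {a : Matrix (Fin n) (Fin n) ℂ} (ha : a.IsHermitian) (b : Fin n → ℂ) :
    (nbF a b : ℂ) = star b ⬝ᵥ a *ᵥ b := by
  rw [nbF_eq_re, ha.coe_re_star_dotProduct_mulVec_self]

theorem betaF_eq (a : Matrix (Fin n) (Fin n) ℂ) (b ζ : Fin n → ℂ) :
    betaF a b ζ = star b ⬝ᵥ a *ᵥ ζ := by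
  rw [betaF, bupF_eq_zupF, zupF_eq_star_vecMul, dotProduct_mulVec]
  rfl

theorem star_betaF {a : Matrix (Fin n) (Fin n) ℂ} (ha : a.IsHermitian) (b ζ : Fin n → ℂ) :
    star (betaF a b ζ) = star ζ ⬝ᵥ a *ᵥ b := by
  rw [betaF_eq, star_dotProduct, star_mulVec, ← dotProduct_mulVec, ha.eq, star_star]

end HermitianForm

section RankUpdate

variable {n : ℕ} {ι : Type*} [Fintype ι] [DecidableEq ι] {a : Matrix (Fin n) (Fin n) ℂ}

theorem smul_add_sum_vecMulVec_zupF_eq_mul (ha : a.IsHermitian) (s : ℂ) (c : ι → ℂ)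
    (w : ι → Fin n → ℂ) :
    s • a + ∑ k, c k • vecMulVec (star (zupF a (w k))) (zupF a (w k)) =
      a * (s • 1 + (of w)ᵀ * diagonal c * ((of w)ᵀᴴ * a)) := by
  have hcol : ∀ k, star (zupF a (w k)) = fun i => (a * (of w)ᵀ) i k := fun k => by
    rw [star_zupF ha]
    ext i
    simp [mulVec, mul_apply, dotProduct]
  have hrow : ∀ k, zupF a (w k) = ((of w)ᵀᴴ * a) k := fun k => by
    ext i
    simp [zupF_eq_star_vecMul, vecMul, mul_apply, dotProduct]
  simp only [hcol]
  simp only [hrow]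
  rw [sum_smul_vecMulVec_eq_mul_diagonal_mul, Matrix.mul_add, Matrix.mul_smul, Matrix.mul_one]
  simp only [Matrix.mul_assoc]

theorem det_smul_add_sum_vecMulVec_zupF (ha : a.IsHermitian) {s : ℂ} (hs : s ≠ 0) (c : ι → ℂ)
    (w : ι → Fin n → ℂ) :
    det (s • a + ∑ k, c k • vecMulVec (star (zupF a (w k))) (zupF a (w k))) =
      s ^ n * det (1 + s⁻¹ • (diagonal c * of fun k l => star (w k) ⬝ᵥ a *ᵥ w l)) * det a := by
  have hgram : (of w)ᵀᴴ * a * (of w)ᵀ = of fun k l => star (w k) ⬝ᵥ a *ᵥ w l := by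
    ext k l
    simp only [mul_apply, conjTranspose_apply, transpose_apply, of_apply, RCLike.star_def,
      Finset.sum_mul, mul_assoc, dotProduct, Pi.star_apply, mulVec, Finset.mul_sum]
    exact Finset.sum_comm
  rw [smul_add_sum_vecMulVec_zupF_eq_mul ha, det_mul, Matrix.mul_assoc, det_smul_one_add_mul hs,
    Fintype.card_fin, Matrix.mul_assoc, hgram, mul_comm]

end RankUpdate

noncomputable section Randers

variable {n : ℕ}

def randersWeights (α μ : ℝ) : Fin 3 → ℂ :=
  ![-(α + μ) / (2 * α ^ 3), (α + μ) / (2 * μ), 1 / (2 * (α + μ) ^ 2)]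

def randersVectors (α μ : ℝ) (β : ℂ) (ζ b : Fin n → ℂ) : Fin 3 → Fin n → ℂ :=
  ![ζ, b, ((α + μ) / α : ℂ) • ζ + ((α + μ) * β / μ : ℂ) • b]

theorem ofReal_CF (a : Matrix (Fin n) (Fin n) ℂ) (b ζ : Fin n → ℂ) :
    ((CF a b ζ : ℝ) : ℂ) = alphaF a ζ + ‖betaF a b ζ‖ := by
  push_cast [CF]
  rfl

theorem ztilF_eq_zupF (a : Matrix (Fin n) (Fin n) ℂ) (b ζ : Fin n → ℂ) :
    ztilF a b ζ = zupF a (randersVectors (alphaF a ζ) ‖betaF a b ζ‖ (betaF a b ζ) ζ b 2) := by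
  ext i
  simp [randersVectors, zupF_add_smul, ztilF, ofReal_CF, bupF_eq_zupF]

theorem htilF_eq_smul_add_sum (a : Matrix (Fin n) (Fin n) ℂ) (b ζ : Fin n → ℂ) :
    htilF a b ζ = ((CF a b ζ / alphaF a ζ : ℝ) : ℂ) • a +
      ∑ k, randersWeights (alphaF a ζ) ‖betaF a b ζ‖ k •
        vecMulVec (star (zupF a (randersVectors (alphaF a ζ) ‖betaF a b ζ‖ (betaF a b ζ) ζ b k)))
          (zupF a (randersVectors (alphaF a ζ) ‖betaF a b ζ‖ (betaF a b ζ) ζ b k)) := by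
  rw [Fin.sum_univ_three, ← ztilF_eq_zupF]
  ext j i
  simp only [htilF, ofReal_CF, bupF_eq_zupF, ofReal_div, randersWeights, randersVectors,
    Fin.isValue, cons_val_zero, cons_val_one, cons_val, Matrix.add_apply, Matrix.smul_apply,
    of_apply, smul_eq_mul, vecMulVec_apply, Pi.star_apply, RCLike.star_def]
  ring

theorem det_one_add_smul_diagonal_mul_gram_randersVectors {α μ : ℝ} (hα : 0 < α) (hμ : 0 < μ)
    {β : ℂ} (hβ : ‖β‖ = μ) (a : Matrix (Fin n) (Fin n) ℂ) {ζ b : Fin n → ℂ}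
    (hζζ : star ζ ⬝ᵥ a *ᵥ ζ = (α ^ 2 : ℝ)) (hζb : star ζ ⬝ᵥ a *ᵥ b = star β)
    (hbζ : star b ⬝ᵥ a *ᵥ ζ = β) {t : ℝ} (hbb : star b ⬝ᵥ a *ᵥ b = t) :
    det (1 + (((α + μ) / α : ℝ) : ℂ)⁻¹ • (diagonal (randersWeights α μ) *
        of fun k l => star (randersVectors α μ β ζ b k) ⬝ᵥ a *ᵥ randersVectors α μ β ζ b l)) =
      ((((α + μ) ^ 2 + α ^ 2 * (t - 1)) / (2 * α * μ) : ℝ) : ℂ) := by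
  have hβ0 : β ≠ 0 := norm_pos_iff.mp (hβ ▸ hμ)
  have hstarβ : star β = (μ : ℂ) ^ 2 / β := by
    rw [eq_div_iff hβ0, ← hβ, ← Complex.conj_mul']
    rfl
  have hα0 : (α : ℂ) ≠ 0 := by exact_mod_cast hα.ne'
  have hμ0 : (μ : ℂ) ≠ 0 := by exact_mod_cast hμ.ne'
  have hαμ : (α : ℂ) + μ ≠ 0 := by exact_mod_cast (add_pos hα hμ).ne'
  rw [det_fin_three]
  simp only [randersWeights, randersVectors, Fin.isValue, Matrix.add_apply, Matrix.smul_apply,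
    diagonal_mul, of_apply, cons_val_zero, cons_val_one, cons_val, one_apply_eq, Fin.reduceEq,
    ne_eq, not_false_eq_true, one_apply_ne, smul_eq_mul, star_add, star_smul, star_div₀,
    star_mul', RCLike.star_def, conj_ofReal, mulVec_add, mulVec_smul, dotProduct_add,
    add_dotProduct, dotProduct_smul, smul_dotProduct, hζζ, hζb, hbζ, hbb, zero_add, ofReal_div,
    ofReal_add, ofReal_mul, ofReal_sub, ofReal_pow, ofReal_one, ofReal_ofNat]
  simp only [← Complex.star_def, hstarβ]
  field_simp
  ring

end Randers

/-- The determinant formula det(h̃^{j̄i}) = (𝒞̃/α)ⁿ (γ/(2α|β|)) det(a^{j̄i}) for the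
fundamental tensor of the Cartan–Randers metric 𝒞̃ = α + |β|. -/
theorem cartan_randers_det (n : ℕ) (a : Matrix (Fin n) (Fin n) ℂ) (b ζ : Fin n → ℂ)
    (hpos : a.PosDef) (hζ : ζ ≠ 0) (hβ : betaF a b ζ ≠ 0) :
    (htilF a b ζ).det =
      (((CF a b ζ / alphaF a ζ : ℝ)) : ℂ) ^ n *
        (((gammaF a b ζ / (2 * alphaF a ζ * ‖betaF a b ζ‖) : ℝ)) : ℂ) *
        a.det := by
  have ha := hpos.isHermitian
  have hαSq : alphaF a ζ ^ 2 = alphaSqF a ζ := Real.sq_sqrt (alphaSqF_pos hpos hζ).le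
  have hα : 0 < alphaF a ζ := Real.sqrt_pos.mpr (alphaSqF_pos hpos hζ)
  have hμ : 0 < ‖betaF a b ζ‖ := norm_pos_iff.mpr hβ
  have hs : ((CF a b ζ / alphaF a ζ : ℝ) : ℂ) ≠ 0 := by
    exact_mod_cast (div_pos (add_pos hα hμ) hα).ne'
  have hC : CF a b ζ = alphaF a ζ + ‖betaF a b ζ‖ := rfl
  rw [htilF_eq_smul_add_sum, det_smul_add_sum_vecMulVec_zupF ha hs, gammaF, hC, ← hαSq,
    det_one_add_smul_diagonal_mul_gram_randersVectors hα hμ rfl a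
      (by rw [hαSq, ofReal_alphaSqF ha]) (star_betaF ha b ζ).symm (betaF_eq a b ζ).symm
      (ofReal_nbF ha b).symm]
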